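/- The unique rational sequence (u_n) satisfying u_0 = 1, u_1 = 6 and the recurrence (n+1)^2 u_{n+1} = (17n^2+17n+6) u_n - 72 n^2 u_{n-1} for n \ge 1 takes only integer values; in fact u_n = \sum_{k=0}^n (-1)^k 8^{n-k} \binom{n}{k} \sum_{j=0}^k \binom{k}{j}^3 for all n. -/

import Mathlib

/-!
Write `f k = ∑ j, (k.choose j)^3` for the Franel numbers. The closed form is
`u n = 8^n ∑ k, (n.choose k) (-1/8)^k f k`, an integer by construction. Both the Franel
recurrence `(k+1)^2 f (k+1) = (7k^2+7k+2) f k + 8k^2 f (k-1)` and the recurrence of this binomial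
transform are proved by creative telescoping: each summand is `G (k+1) - G k` for an explicit
Zeilberger certificate `G` vanishing at both ends of the range. As the leading coefficient
`(n+1)^2` never vanishes, the recurrence and the two initial values determine `u`.
-/

def sporadicF (n : ℕ) : ℤ :=
  ∑ k ∈ Finset.range (n + 1),
    (-1 : ℤ) ^ k * 8 ^ (n - k) * (n.choose k : ℤ) *
      ∑ j ∈ Finset.range (k + 1), (k.choose j : ℤ) ^ 3

open Finset

theorem Nat.cast_choose_mul_succ {R : Type*} [CommRing R] (m k : ℕ) :
    (m.choose k : R) * (m + 1) = ((m + 1).choose k : R) * (m + 1 - k) := by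
  rcases le_or_gt k (m + 1) with h | h
  · have := congrArg (Nat.cast : ℕ → R) (Nat.choose_mul_succ_eq m k)
    push_cast [h] at this
    exact this
  · rw [Nat.choose_eq_zero_of_lt (by omega), Nat.choose_eq_zero_of_lt h]
    simp

theorem Nat.cast_choose_succ_right_mul {R : Type*} [CommRing R] (m k : ℕ) :
    (m.choose (k + 1) : R) * (k + 1) = (m.choose k : R) * (m - k) := by
  rcases le_or_gt k m with h | h
  · have := congrArg (Nat.cast : ℕ → R) (Nat.choose_succ_right_eq m k)
    push_cast [h] at this
    exact this
  · rw [Nat.choose_eq_zero_of_lt (by omega), Nat.choose_eq_zero_of_lt h]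
    simp

-- Valid for every `k`, so the certificate identities below need no case split on `k ≤ n`.
theorem Nat.cast_choose_eq_div_of_add_two {K : Type*} [Field K] [CharZero K] (n k : ℕ) :
    ((n + 1).choose k : K) = ((n + 2).choose k : K) * (n + 2 - k) / (n + 2) ∧
    (n.choose k : K) = ((n + 2).choose k : K) * (n + 2 - k) * (n + 1 - k) / ((n + 2) * (n + 1)) ∧
    ((n + 2).choose (k + 1) : K) = ((n + 2).choose k : K) * (n + 2 - k) / (k + 1) ∧
    ((n + 1).choose (k + 1) : K)
      = ((n + 2).choose k : K) * (n + 2 - k) * (n + 1 - k) / ((n + 2) * (k + 1)) := by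
  have h0 := Nat.cast_choose_mul_succ (R := K) n k
  have h1 : ((n + 1).choose k : K) * (n + 1 + 1) = ((n + 2).choose k : K) * (n + 1 + 1 - k) := by
    exact_mod_cast Nat.cast_choose_mul_succ (R := K) (n + 1) k
  have h2 := Nat.cast_choose_succ_right_mul (R := K) (n + 2) k
  have h3 := Nat.cast_choose_succ_right_mul (R := K) (n + 1) k
  push_cast at h2 h3
  have hn1 : (n + 1 : K) ≠ 0 := Nat.cast_add_one_ne_zero n
  have hn2 : (n + 2 : K) ≠ 0 := by exact_mod_cast (n + 1).succ_ne_zero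
  have hk1 : (k + 1 : K) ≠ 0 := Nat.cast_add_one_ne_zero k
  refine ⟨?_, ?_, ?_, ?_⟩ <;> rw [eq_div_iff (by positivity)]
  · linear_combination h1
  · linear_combination (n + 1 - k : K) * h1 + (n + 2 : K) * h0
  · linear_combination h2
  · linear_combination (n + 2 : K) * h3 + (n + 1 - k : K) * h1

theorem Finset.sum_range_eq_zero_of_telescoping {G : Type*} [AddCommGroup G] {f g : ℕ → G}
    {N : ℕ} (hfg : ∀ k < N, f k = g (k + 1) - g k) (h0 : g 0 = 0) (hN : g N = 0) :
    ∑ k ∈ range N, f k = 0 := by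
  rw [sum_congr rfl fun k hk => hfg k (mem_range.1 hk), sum_range_sub, h0, hN, sub_zero]

theorem Finset.sum_range_eq_of_forall_ge_eq_zero {M : Type*} [AddCommMonoid M] {f : ℕ → M}
    {m N : ℕ} (hmN : m ≤ N) (hf : ∀ k, m ≤ k → f k = 0) :
    ∑ k ∈ range m, f k = ∑ k ∈ range N, f k :=
  sum_subset (range_subset_range.2 hmN) fun k _ hk => hf k (by simpa using hk)

def franel (n : ℕ) : ℕ := ∑ k ∈ range (n + 1), n.choose k ^ 3

theorem cast_franel_eq_sum_range {m N : ℕ} (hmN : m < N) :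
    (franel m : ℚ) = ∑ k ∈ range N, (m.choose k : ℚ) ^ 3 := by
  rw [franel, Nat.cast_sum]
  push_cast
  exact sum_range_eq_of_forall_ge_eq_zero hmN fun k hk => by
    simp [Nat.choose_eq_zero_of_lt (Nat.lt_of_succ_le hk)]

-- Zeilberger's certificate for `∑ k, (n.choose k)^3`, as produced by computer algebra.
def franelCertificate (n k : ℕ) : ℚ :=
  k ^ 3 * ((n + 2).choose k : ℚ) ^ 3 / ((n + 1) ^ 3 * (n + 2) ^ 3) *
    (-72 + 78 * k - 30 * k ^ 2 + 4 * k ^ 3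
      + n * (-272 + 249 * k - 78 * k ^ 2 + 8 * k ^ 3)
      + n ^ 2 * (-402 + 291 * k - 66 * k ^ 2 + 4 * k ^ 3)
      + n ^ 3 * (-290 + 147 * k - 18 * k ^ 2)
      + n ^ 4 * (-102 + 27 * k)
      - 14 * n ^ 5)

theorem choose_cube_summand_eq_franelCertificate_sub (n k : ℕ) :
    ((n : ℚ) + 2) ^ 2 * ((n + 2).choose k : ℚ) ^ 3
      - (7 * (n : ℚ) ^ 2 + 21 * n + 16) * ((n + 1).choose k : ℚ) ^ 3
      - 8 * ((n : ℚ) + 1) ^ 2 * (n.choose k : ℚ) ^ 3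
    = franelCertificate n (k + 1) - franelCertificate n k := by
  obtain ⟨h1, h0, h2, -⟩ := Nat.cast_choose_eq_div_of_add_two (K := ℚ) n k
  rw [franelCertificate, franelCertificate, h0, h1, h2]
  push_cast
  field_simp
  ring

theorem franel_add_two (n : ℕ) :
    (n + 2) ^ 2 * franel (n + 2)
      = (7 * n ^ 2 + 21 * n + 16) * franel (n + 1) + 8 * (n + 1) ^ 2 * franel n := by
  have htel := sum_range_eq_zero_of_telescoping (N := n + 3)
    (fun k _ => choose_cube_summand_eq_franelCertificate_sub n k)
    (by simp [franelCertificate]) (by simp [franelCertificate, Nat.choose_succ_self])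
  simp only [sum_sub_distrib, ← mul_sum, ← cast_franel_eq_sum_range (by omega : n + 2 < n + 3),
    ← cast_franel_eq_sum_range (by omega : n + 1 < n + 3),
    ← cast_franel_eq_sum_range (by omega : n < n + 3)] at htel
  exact_mod_cast (by linear_combination htel :
    ((n : ℚ) + 2) ^ 2 * franel (n + 2)
      = (7 * (n : ℚ) ^ 2 + 21 * n + 16) * franel (n + 1) + 8 * ((n : ℚ) + 1) ^ 2 * franel n)

theorem franel_succ (n : ℕ) :
    (n + 1) ^ 2 * franel (n + 1)
      = (7 * n ^ 2 + 7 * n + 2) * franel n + 8 * n ^ 2 * franel (n - 1) := by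
  cases n with
  | zero => rfl
  | succ n => rw [Nat.add_sub_cancel]; linear_combination franel_add_two n

def binomialTransform (q : ℚ) (f : ℕ → ℚ) (n : ℕ) : ℚ :=
  ∑ k ∈ range (n + 1), (n.choose k : ℚ) * (q ^ k * f k)

-- The factor `k ^ 2` makes the junk value `f (0 - 1) = f 0` harmless.
def binomialTransformCertificate (f : ℕ → ℚ) (n k : ℕ) : ℚ :=
  8 * (-8 : ℚ)⁻¹ ^ k * k ^ 2 *
    (((n + 1).choose k : ℚ) * f (k - 1) - k * ((n + 2).choose k : ℚ) * f k / (n + 2))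

section FranelRecurrence

variable {f : ℕ → ℚ}
  (hf : ∀ k : ℕ, ((k : ℚ) + 1) ^ 2 * f (k + 1)
    = (7 * k ^ 2 + 7 * k + 2) * f k + 8 * k ^ 2 * f (k - 1))
include hf

theorem binomialTransform_summand_eq_certificate_sub (n k : ℕ) :
    (8 * ((n : ℚ) + 2) ^ 2 * ((n + 2).choose k : ℚ)
      - (17 * (n : ℚ) ^ 2 + 51 * n + 40) * ((n + 1).choose k : ℚ)
      + 9 * ((n : ℚ) + 1) ^ 2 * (n.choose k : ℚ)) * ((-8 : ℚ)⁻¹ ^ k * f k)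
    = binomialTransformCertificate f n (k + 1) - binomialTransformCertificate f n k := by
  obtain ⟨h1, h0, h2, h3⟩ := Nat.cast_choose_eq_div_of_add_two (K := ℚ) n k
  have hf_succ : f (k + 1)
      = ((7 * k ^ 2 + 7 * k + 2) * f k + 8 * k ^ 2 * f (k - 1)) / ((k : ℚ) + 1) ^ 2 := by
    rw [eq_div_iff (by positivity)]
    linear_combination hf k
  rw [binomialTransformCertificate, binomialTransformCertificate, h0, h1, h2, h3,
    Nat.add_sub_cancel, pow_succ, hf_succ]
  push_cast
  field_simp
  ring

theorem binomialTransform_neg_inv_eight_add_two (n : ℕ) :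
    8 * ((n : ℚ) + 2) ^ 2 * binomialTransform (-8)⁻¹ f (n + 2)
      = (17 * (n : ℚ) ^ 2 + 51 * n + 40) * binomialTransform (-8)⁻¹ f (n + 1)
        - 9 * ((n : ℚ) + 1) ^ 2 * binomialTransform (-8)⁻¹ f n := by
  have htel := sum_range_eq_zero_of_telescoping (N := n + 3)
    (fun k _ => binomialTransform_summand_eq_certificate_sub hf n k)
    (by simp [binomialTransformCertificate])
    (by simp [binomialTransformCertificate, Nat.choose_succ_self, Nat.choose_eq_zero_of_lt])
  have hvanish (m : ℕ) : ∀ k, m + 1 ≤ k → (m.choose k : ℚ) * ((-8 : ℚ)⁻¹ ^ k * f k) = 0 :=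
    fun k hk => by simp [Nat.choose_eq_zero_of_lt (Nat.lt_of_succ_le hk)]
  rw [binomialTransform, binomialTransform, binomialTransform,
    sum_range_eq_of_forall_ge_eq_zero (by omega : n + 2 ≤ n + 3) (hvanish (n + 1)),
    sum_range_eq_of_forall_ge_eq_zero (by omega : n + 1 ≤ n + 3) (hvanish n),
    ← sub_eq_zero, ← htel]
  simp only [mul_sum, ← sum_sub_distrib]
  refine sum_congr rfl fun k _ => ?_
  ring

end FranelRecurrence

theorem cast_sporadicF (n : ℕ) :
    (sporadicF n : ℚ) = 8 ^ n * binomialTransform (-8)⁻¹ (fun k => franel k) n := by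
  rw [sporadicF, binomialTransform, mul_sum]
  push_cast [franel]
  refine sum_congr rfl fun k hk => ?_
  rw [pow_sub₀ _ (by norm_num) (Nat.lt_succ_iff.1 (mem_range.1 hk)),
    show (-8 : ℚ)⁻¹ = -1 / 8 by norm_num, div_pow]
  field_simp

theorem sporadicF_add_two (n : ℕ) :
    ((n : ℤ) + 2) ^ 2 * sporadicF (n + 2)
      = (17 * (n : ℤ) ^ 2 + 51 * n + 40) * sporadicF (n + 1)
        - 72 * ((n : ℤ) + 1) ^ 2 * sporadicF n := by
  have h := binomialTransform_neg_inv_eight_add_two (f := fun k => (franel k : ℚ))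
    (fun k => by exact_mod_cast franel_succ k) n
  qify
  rw [cast_sporadicF, cast_sporadicF, cast_sporadicF]
  linear_combination (8 : ℚ) ^ n * 8 * h

theorem eq_of_second_order_recurrence {R : Type*} [CommRing R] [IsDomain R] {a b c u v : ℕ → R}
    (ha : ∀ n, a n ≠ 0) (hu : ∀ n, a n * u (n + 2) = b n * u (n + 1) + c n * u n)
    (hv : ∀ n, a n * v (n + 2) = b n * v (n + 1) + c n * v n) (h0 : u 0 = v 0) (h1 : u 1 = v 1) :
    u = v := by
  funext n
  induction n using Nat.twoStepInduction with
  | zero => exact h0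
  | one => exact h1
  | more n ih0 ih1 => exact mul_left_cancel₀ (ha n) (by rw [hu, hv, ih0, ih1])

/-- The unique rational solution of the (17,6,72) recurrence with `u 0 = 1`, `u 1 = 6`
takes integer values; in fact it is given by the explicit binomial sum `sporadicF`. -/
theorem sporadic_integrality (u : ℕ → ℚ) (h0 : u 0 = 1) (h1 : u 1 = 6)
    (hrec : ∀ n : ℕ, 1 ≤ n →
      ((n : ℚ) + 1) ^ 2 * u (n + 1)
        = (17 * (n : ℚ) ^ 2 + 17 * n + 6) * u n - 72 * (n : ℚ) ^ 2 * u (n - 1)) :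
    (∀ n : ℕ, ∃ z : ℤ, u n = z) ∧ ∀ n : ℕ, u n = (sporadicF n : ℚ) := by
  have hu : u = fun n => (sporadicF n : ℚ) := by
    refine eq_of_second_order_recurrence (a := fun n => ((n : ℚ) + 2) ^ 2)
      (b := fun n => 17 * (n : ℚ) ^ 2 + 51 * n + 40) (c := fun n => -72 * ((n : ℚ) + 1) ^ 2)
      (fun n => by positivity) (fun n => ?_) (fun n => ?_) ?_ ?_
    · have h := hrec (n + 1) le_add_self
      rw [Nat.add_sub_cancel] at h
      push_cast at h
      linear_combination h
    · have h := sporadicF_add_two n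
      qify at h
      linear_combination h
    · rw [h0]; norm_num [sporadicF]
    · rw [h1]; norm_num [sporadicF, sum_range_succ]
  exact ⟨fun n => ⟨sporadicF n, congrFun hu n⟩, congrFun hu⟩
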